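/- arXiv:2109.01352 — 3 statements merged into one kernel-verified Lean document; each statement's English description precedes it below -/
import Mathlib

section
/- Let A ⊆ [0,1] and Y : [0,1] → ℕ be injective on A. Then the function f : [0,1] → ℝ defined by f(x) = 2^{−(Y(x)+1)} if x ∈ A and f(x) = 0 otherwise has bounded variation on [0,1], with total variation at most 2. -/
open Set Finset

/-! Since `Y` is injective on `A`, the values of `f` at any finitely many distinct points sum to at
most `∑ 2^{-(k+1)} = 1`. As `f ≥ 0`, each term `|f b - f a|` is at most `f a + f b`, so a partition's
variation sum is at most twice the sum of `f` over its points. -/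

lemma sum_two_zpow_neg_succ_le_one (T : Finset ℕ) : ∑ k ∈ T, (2 : ℝ) ^ (-(k + 1 : ℤ)) ≤ 1 := by
  have hterm : ∀ k : ℕ, (2 : ℝ) ^ (-(k + 1 : ℤ)) = 1 / 2 / 2 ^ k := by
    intro k
    rw [zpow_neg, ← Nat.cast_succ, zpow_natCast, pow_succ]
    field_simp
  simp only [hterm]
  calc ∑ k ∈ T, (1 : ℝ) / 2 / 2 ^ k
      ≤ ∑' k : ℕ, (1 : ℝ) / 2 / 2 ^ k :=
        (summable_geometric_two' 1).sum_le_tsum T fun k _ => by positivity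
    _ = 1 := tsum_geometric_two' 1

lemma sum_indicator_two_zpow_neg_succ_le_one {α : Type*} {A : Set α} {Y : α → ℕ}
    (hY : InjOn Y A) (s : Finset α) :
    ∑ t ∈ s, A.indicator (fun t => (2 : ℝ) ^ (-(Y t + 1 : ℤ))) t ≤ 1 := by
  classical
  rw [Finset.sum_indicator_eq_sum_filter,
    ← Finset.sum_image (f := fun k : ℕ => (2 : ℝ) ^ (-(k + 1 : ℤ))) fun a ha b hb =>
    hY (Finset.mem_filter.1 ha).2 (Finset.mem_filter.1 hb).2]
  exact sum_two_zpow_neg_succ_le_one _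

lemma sum_abs_sub_succ_le_two_mul_sum {a : ℕ → ℝ} (ha : ∀ i, 0 ≤ a i) (n : ℕ) :
    ∑ i ∈ range n, |a (i + 1) - a i| ≤ 2 * ∑ i ∈ range (n + 1), a i := by
  have hstep : ∀ i, |a (i + 1) - a i| ≤ a (i + 1) + a i := fun i => by
    simpa only [abs_of_nonneg (ha _)] using abs_sub (a (i + 1)) (a i)
  calc ∑ i ∈ range n, |a (i + 1) - a i|
      ≤ ∑ i ∈ range n, a (i + 1) + ∑ i ∈ range n, a i := by
        rw [← Finset.sum_add_distrib]; exact Finset.sum_le_sum fun i _ => hstep i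
    _ ≤ 2 * ∑ i ∈ range (n + 1), a i := by
        linarith [Finset.sum_range_succ' a n, Finset.sum_range_succ a n, ha 0, ha n]

theorem injective_indicator_bounded_variation_general
    (A : Set ℝ)
    (Y : ℝ → ℕ) (hY : ∀ x ∈ A, ∀ y ∈ A, Y x = Y y → x = y)
    (f : ℝ → ℝ)
    (hf : ∀ x, (x ∈ A → f x = (2:ℝ) ^ (-(Y x + 1 : ℤ))) ∧ (x ∉ A → f x = 0)) :
    ∀ (n : ℕ) (x : ℕ → ℝ), x 0 = 0 → x n = 1 →
      (∀ i < n, x i < x (i + 1)) →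
      ∑ i ∈ Finset.range n, |f (x (i + 1)) - f (x i)| ≤ 2 := by
  intro n x _ _ hmono
  have hf_eq : f = A.indicator fun t => (2 : ℝ) ^ (-(Y t + 1 : ℤ)) := funext fun t => by
    by_cases ht : t ∈ A <;> simp [ht, hf t]
  have hx_inj : InjOn x (Set.Iic n) := (strictMonoOn_Iic_of_lt_succ hmono).injOn
  subst hf_eq
  calc ∑ i ∈ range n, |_ - _|
      ≤ 2 * ∑ i ∈ range (n + 1), A.indicator _ (x i) :=
        sum_abs_sub_succ_le_two_mul_sum (fun i => indicator_nonneg (fun t _ => by positivity) _) n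
    _ = 2 * ∑ t ∈ (range (n + 1)).image x, A.indicator _ t := by
        rw [Finset.sum_image fun i hi j hj => hx_inj (by simpa [Nat.lt_succ_iff] using hi)
          (by simpa [Nat.lt_succ_iff] using hj)]
    _ ≤ 2 * 1 := by gcongr; exact sum_indicator_two_zpow_neg_succ_le_one hY _
    _ = 2 := mul_one 2

theorem injective_indicator_bounded_variation
    (A : Set ℝ) (hA : A ⊆ Icc (0:ℝ) 1)
    (Y : ℝ → ℕ) (hY : ∀ x ∈ A, ∀ y ∈ A, Y x = Y y → x = y)
    (f : ℝ → ℝ)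
    (hf : ∀ x, (x ∈ A → f x = (2:ℝ) ^ (-(Y x + 1 : ℤ))) ∧ (x ∉ A → f x = 0)) :
    ∀ (n : ℕ) (x : ℕ → ℝ), x 0 = 0 → x n = 1 →
      (∀ i < n, x i < x (i + 1)) →
      ∑ i ∈ Finset.range n, |f (x (i + 1)) - f (x i)| ≤ 2 :=
  injective_indicator_bounded_variation_general A Y hY f hf
end

section
/- Let A ⊆ [0,1], Y : [0,1] → ℕ injective on A, and f(x) = 2^{−(Y(x)+1)} for x ∈ A, f(x) = 0 otherwise. Then f is Riemann integrable on [0,1] and ∫₀¹ f(x) dx = 0. -/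
/-!
Fix `N` with `2⁻ᴺ < ε/2`. Off the finite set `F` of points of `A` with `Y < N` (at most `N` of
them, by injectivity) we have `f ≤ 2⁻ᴺ`, so those intervals contribute at most `2⁻ᴺ` in total.
A point is the tag of at most two intervals of a partition, so at most `2N` intervals have their
tag in `F`; as `f ≤ 1`, they contribute at most `2Nδ`, which is small once the mesh `δ` is.
-/

open Set Finset

section TaggedPartition

variable {n : ℕ} {x t : ℕ → ℝ}

theorem eq_succ_of_tag_eq (hmono : ∀ i < n, x i < x (i + 1))
    (htag : ∀ i < n, t i ∈ Icc (x i) (x (i + 1))) {i j : ℕ} (hj : j < n) (hij : i < j)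
    (h : t i = t j) : j = i + 1 := by
  have hx : StrictMonoOn x (Set.Iic n) := strictMonoOn_Iic_of_lt_succ hmono
  by_contra hne
  have : x (i + 1) < x j := hx (Set.mem_Iic.2 (by omega)) (Set.mem_Iic.2 hj.le) (by omega)
  linarith [(htag i (hij.trans hj)).2, (htag j hj).1]

theorem card_filter_tag_mem_le (hmono : ∀ i < n, x i < x (i + 1))
    (htag : ∀ i < n, t i ∈ Icc (x i) (x (i + 1))) (F : Finset ℝ) :
    #{i ∈ range n | t i ∈ F} ≤ 2 * #F := by
  have key : #{i ∈ range n | t i ∈ F} ≤ #(F ×ˢ range 2) := by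
    refine card_le_card_of_injOn (fun i ↦ (t i, i % 2)) ?_ ?_
    · intro i hi
      simp only [coe_filter, Finset.mem_range, Set.mem_ofPred_eq] at hi
      simp only [coe_product, Set.mem_prod, mem_coe, Finset.mem_range]
      exact ⟨hi.2, Nat.mod_lt i two_pos⟩
    · intro i hi j hj hij
      simp only [coe_filter, Finset.mem_range, Set.mem_ofPred_eq] at hi hj
      simp only [Prod.mk.injEq] at hij
      rcases lt_trichotomy i j with h | h | h
      · have := eq_succ_of_tag_eq hmono htag hj.1 h hij.1
        omega
      · exact h
      · have := eq_succ_of_tag_eq hmono htag hi.1 h hij.1.symm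
        omega
  simpa [card_product, mul_comm] using key

theorem riemannSum_le_of_le_off_finset {f : ℝ → ℝ} {F : Finset ℝ} {M η δ : ℝ}
    (hmono : ∀ i < n, x i < x (i + 1)) (htag : ∀ i < n, t i ∈ Icc (x i) (x (i + 1)))
    (hmesh : ∀ i < n, x (i + 1) - x i ≤ δ) (hδ : 0 ≤ δ) (hM : 0 ≤ M) (hη : 0 ≤ η)
    (hfM : ∀ a ∈ F, f a ≤ M) (hfη : ∀ a ∉ F, f a ≤ η) :
    ∑ i ∈ range n, f (t i) * (x (i + 1) - x i) ≤ 2 * #F * (M * δ) + η * (x n - x 0) := by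
  have hΔ : ∀ i ∈ range n, 0 ≤ x (i + 1) - x i := fun i hi ↦
    (sub_pos.2 (hmono i (Finset.mem_range.1 hi))).le
  rw [← sum_filter_add_sum_filter_not (range n) (fun i ↦ t i ∈ F)]
  gcongr ?_ + ?_
  · calc ∑ i ∈ range n with t i ∈ F, f (t i) * (x (i + 1) - x i)
        ≤ ∑ i ∈ range n with t i ∈ F, M * δ := by
          refine sum_le_sum fun i hi ↦ ?_
          rw [mem_filter, Finset.mem_range] at hi
          exact mul_le_mul (hfM _ hi.2) (hmesh i hi.1) (hΔ i (Finset.mem_range.2 hi.1)) hM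
      _ = #{i ∈ range n | t i ∈ F} * (M * δ) := by rw [sum_const, nsmul_eq_mul]
      _ ≤ 2 * #F * (M * δ) := by
          gcongr
          exact_mod_cast card_filter_tag_mem_le hmono htag F
  · calc ∑ i ∈ range n with t i ∉ F, f (t i) * (x (i + 1) - x i)
        ≤ ∑ i ∈ range n with t i ∉ F, η * (x (i + 1) - x i) := by
          refine sum_le_sum fun i hi ↦ ?_
          rw [mem_filter] at hi
          exact mul_le_mul_of_nonneg_right (hfη _ hi.2) (hΔ i hi.1)
      _ ≤ ∑ i ∈ range n, η * (x (i + 1) - x i) :=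
          sum_le_sum_of_subset_of_nonneg (filter_subset _ _)
            fun i hi _ ↦ mul_nonneg hη (hΔ i hi)
      _ = η * (x n - x 0) := by rw [← mul_sum, sum_range_sub]

end TaggedPartition

theorem Set.InjOn.exists_finset_card_le_of_lt {α : Type*} {A : Set α} {Y : α → ℕ} (hY : InjOn Y A)
    (N : ℕ) : ∃ F : Finset α, #F ≤ N ∧ ∀ a ∈ A, Y a < N → a ∈ F := by
  have hfin : {a ∈ A | Y a < N}.Finite :=
    Set.Finite.of_finite_image ((finite_Iio N).subset (image_subset_iff.2 fun _ ha ↦ ha.2))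
      (hY.mono fun _ ha ↦ ha.1)
  refine ⟨hfin.toFinset, ?_, fun a ha hlt ↦ hfin.mem_toFinset.2 ⟨ha, hlt⟩⟩
  calc #hfin.toFinset ≤ #(Finset.range N) :=
        card_le_card_of_injOn Y (fun a ha ↦ Finset.mem_range.2 (hfin.mem_toFinset.1 ha).2)
          (hY.mono fun a ha ↦ (hfin.mem_toFinset.1 ha).1)
    _ = N := card_range N

theorem mem_Icc_zero_half_pow {A : Set ℝ} {Y : ℝ → ℕ} {f : ℝ → ℝ}
    (hf : ∀ x, (x ∈ A → f x = (2:ℝ) ^ (-(Y x + 1 : ℤ))) ∧ (x ∉ A → f x = 0)) {a : ℝ} {N : ℕ}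
    (hN : a ∈ A → N ≤ Y a) : f a ∈ Set.Icc 0 ((1 / 2) ^ N) := by
  by_cases ha : a ∈ A
  · rw [(hf a).1 ha, one_div, inv_pow, ← zpow_natCast, ← zpow_neg]
    exact ⟨by positivity, zpow_le_zpow_right₀ one_le_two (by have := hN ha; omega)⟩
  · rw [(hf a).2 ha]
    exact ⟨le_rfl, by positivity⟩

theorem injective_indicator_riemann_integral_zero_general
    (A : Set ℝ)
    (Y : ℝ → ℕ) (hY : ∀ x ∈ A, ∀ y ∈ A, Y x = Y y → x = y)
    (f : ℝ → ℝ)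
    (hf : ∀ x, (x ∈ A → f x = (2:ℝ) ^ (-(Y x + 1 : ℤ))) ∧ (x ∉ A → f x = 0)) :
    ∀ ε > (0:ℝ), ∃ δ > (0:ℝ), ∀ (n : ℕ) (x t : ℕ → ℝ),
      x 0 = 0 → x n = 1 → (∀ i < n, x i < x (i + 1)) →
      (∀ i < n, t i ∈ Icc (x i) (x (i + 1))) →
      (∀ i < n, x (i + 1) - x i ≤ δ) →
      |∑ i ∈ Finset.range n, f (t i) * (x (i + 1) - x i)| < ε := by
  intro ε hε
  obtain ⟨N, hN⟩ := exists_pow_lt_of_lt_one (half_pos hε) (by norm_num : (1 / 2 : ℝ) < 1)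
  obtain ⟨F, hFN, hAF⟩ := InjOn.exists_finset_card_le_of_lt (fun a ha b hb ↦ hY a ha b hb) N
  have hf_bounds (a : ℝ) : f a ∈ Set.Icc 0 1 := by
    simpa using mem_Icc_zero_half_pow hf (N := 0) fun _ ↦ Nat.zero_le _
  have hf_small (a : ℝ) (ha : a ∉ F) : f a ≤ (1 / 2) ^ N :=
    (mem_Icc_zero_half_pow hf fun haA ↦ not_lt.1 (mt (hAF a haA) ha)).2
  set δ := ε / (4 * N + 4)
  have hFδ : 2 * (#F : ℝ) * (1 * δ) ≤ ε / 2 := by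
    have : (#F : ℝ) ≤ N := by exact_mod_cast hFN
    rw [one_mul, ← mul_div_assoc, div_le_div_iff₀ (by positivity) two_pos]
    nlinarith
  refine ⟨δ, by positivity, fun n x t hx0 hxn hmono htag hmesh ↦ ?_⟩
  calc |∑ i ∈ Finset.range n, f (t i) * (x (i + 1) - x i)|
      = ∑ i ∈ Finset.range n, f (t i) * (x (i + 1) - x i) :=
        abs_of_nonneg (sum_nonneg fun i hi ↦ mul_nonneg (hf_bounds _).1
          (sub_pos.2 (hmono i (Finset.mem_range.1 hi))).le)
    _ ≤ 2 * #F * (1 * δ) + (1 / 2) ^ N * (x n - x 0) :=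
        riemannSum_le_of_le_off_finset hmono htag hmesh (by positivity) zero_le_one
          (by positivity) (fun a _ ↦ (hf_bounds a).2) hf_small
    _ < ε := by rw [hx0, hxn]; linarith

theorem injective_indicator_riemann_integral_zero
    (A : Set ℝ) (hA : A ⊆ Icc (0:ℝ) 1)
    (Y : ℝ → ℕ) (hY : ∀ x ∈ A, ∀ y ∈ A, Y x = Y y → x = y)
    (f : ℝ → ℝ)
    (hf : ∀ x, (x ∈ A → f x = (2:ℝ) ^ (-(Y x + 1 : ℤ))) ∧ (x ∉ A → f x = 0)) :
    ∀ ε > (0:ℝ), ∃ δ > (0:ℝ), ∀ (n : ℕ) (x t : ℕ → ℝ),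
      x 0 = 0 → x n = 1 → (∀ i < n, x i < x (i + 1)) →
      (∀ i < n, t i ∈ Icc (x i) (x (i + 1))) →
      (∀ i < n, x (i + 1) - x i ≤ δ) →
      |∑ i ∈ Finset.range n, f (t i) * (x (i + 1) - x i)| < ε :=
  injective_indicator_riemann_integral_zero_general A Y hY f hf
end

section
/- Let f : ℝ → ℝ be defined by f(x) = 2^{−(Y(x)+1)} for x ∈ A and f(x) = 0 otherwise, where A ⊆ ℝ and Y : ℝ → ℕ is injective on A. Then for every s ≥ 0 and N ∈ ℕ, ∫₀ᴺ e^{−st} f(t) dt = 0; hence the Laplace transform of f exists and is identically zero on [0,∞). -/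
open Set Finset

/-!
Since `e^{-st} ≤ 1`, a tagged Riemann sum of `e^{-st} f(t)` with mesh at most `δ` is bounded by
`δ ∑ᵢ f(tᵢ)`. Tags whose indices have the same parity are distinct points, and distinct points of
`A` have distinct values under `Y`, so each parity class contributes at most
`∑ₖ 2^{-(k+1)} = 1`. Hence every Riemann sum of mesh `≤ δ` is at most `2δ`, and the integral over
`[0, N]` vanishes.
-/

lemma two_zpow_neg_succ (k : ℕ) : (2:ℝ) ^ (-(k + 1 : ℤ)) = 1 / 2 / 2 ^ k := by
  rw [zpow_neg, zpow_add₀ two_ne_zero]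
  simp only [zpow_natCast, zpow_one]
  ring

lemma sum_two_zpow_neg_succ_le_one_s18 {ι : Type*} (S : Finset ι) {g : ι → ℕ} (hg : InjOn g S) :
    ∑ i ∈ S, (2:ℝ) ^ (-(g i + 1 : ℤ)) ≤ 1 := by
  rw [← sum_image (f := fun k : ℕ => (2:ℝ) ^ (-(k + 1 : ℤ))) hg]
  calc ∑ k ∈ S.image g, (2:ℝ) ^ (-(k + 1 : ℤ))
      = ∑ k ∈ S.image g, 1 / 2 / 2 ^ k := sum_congr rfl fun k _ => two_zpow_neg_succ k
    _ ≤ ∑' k : ℕ, (1:ℝ) / 2 / 2 ^ k :=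
        (summable_geometric_two' 1).sum_le_tsum _ fun k _ => by positivity
    _ = 1 := tsum_geometric_two' 1

lemma sum_indicator_two_zpow_le_one {α : Type*} {A : Set α} {Y : α → ℕ} (hY : InjOn Y A)
    (T : Finset α) : ∑ x ∈ T, A.indicator (fun x => (2:ℝ) ^ (-(Y x + 1 : ℤ))) x ≤ 1 := by
  classical
  rw [sum_indicator_eq_sum_filter]
  exact sum_two_zpow_neg_succ_le_one_s18 _ (hY.mono fun x hx => (mem_filter.mp hx).2)

lemma sum_comp_le_one_of_injOn {ι α : Type*} {g : α → ℝ}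
    (hg : ∀ T : Finset α, ∑ x ∈ T, g x ≤ 1) {F : Finset ι} {t : ι → α} (ht : InjOn t F) :
    ∑ i ∈ F, g (t i) ≤ 1 := by
  classical
  rw [← sum_image ht]
  exact hg _

lemma sum_range_comp_le_two {α : Type*} {g : α → ℝ} (hg : ∀ T : Finset α, ∑ x ∈ T, g x ≤ 1)
    {n : ℕ} {t : ℕ → α} (ht : ∀ i < n, ∀ j < n, i + 1 < j → t i ≠ t j) :
    ∑ i ∈ range n, g (t i) ≤ 2 := by
  have hinj : ∀ (P : ℕ → Prop) [DecidablePred P], (∀ i j, P i → P j → i < j → i + 1 < j) →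
      InjOn t ((range n).filter P) := by
    intro P _ hP i hi j hj htij
    simp only [coe_filter, Finset.mem_range, Set.mem_ofPred_eq] at hi hj
    by_contra hne
    rcases lt_or_gt_of_ne hne with hij | hji
    · exact ht i hi.1 j hj.1 (hP i j hi.2 hj.2 hij) htij
    · exact ht j hj.1 i hi.1 (hP j i hj.2 hi.2 hji) htij.symm
  rw [← sum_filter_add_sum_filter_not (range n) Even]
  have h_even := sum_comp_le_one_of_injOn hg <| hinj Even fun i j hi hj hij => by
    rw [Nat.even_iff] at hi hj; omega
  have h_odd := sum_comp_le_one_of_injOn hg <| hinj (¬ Even ·) fun i j hi hj hij => by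
    rw [Nat.not_even_iff] at hi hj; omega
  linarith

lemma abs_sum_exp_mul_tag_le {g : ℝ → ℝ} (hg0 : ∀ y, 0 ≤ g y)
    (hg : ∀ T : Finset ℝ, ∑ y ∈ T, g y ≤ 1) {s δ : ℝ} (hs : 0 ≤ s) (hδ0 : 0 ≤ δ) {n : ℕ}
    {x t : ℕ → ℝ} (hx0 : x 0 = 0) (hx : ∀ i < n, x i < x (i + 1))
    (ht : ∀ i < n, t i ∈ Icc (x i) (x (i + 1))) (hδ : ∀ i < n, x (i + 1) - x i ≤ δ) :
    |∑ i ∈ range n, Real.exp (-s * t i) * g (t i) * (x (i + 1) - x i)| ≤ 2 * δ := by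
  have hx_mono : StrictMonoOn x (Set.Iic n) :=
    strictMonoOn_Iic_of_lt_succ fun m hm => by rw [Order.succ_eq_add_one]; exact hx m hm
  have hIic : ∀ {i}, i ≤ n → i ∈ Set.Iic n := Set.mem_Iic.mpr
  have ht_nonneg : ∀ i < n, 0 ≤ t i := fun i hi =>
    hx0 ▸ (hx_mono.monotoneOn (hIic n.zero_le) (hIic hi.le) i.zero_le).trans (ht i hi).1
  have ht_sep : ∀ i < n, ∀ j < n, i + 1 < j → t i ≠ t j := fun i hi j hj hij =>
    ((ht i hi).2.trans_lt ((hx_mono (hIic hi) (hIic hj.le) hij).trans_le (ht j hj).1)).ne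
  have hterm : ∀ i ∈ range n,
      |Real.exp (-s * t i) * g (t i) * (x (i + 1) - x i)| ≤ g (t i) * δ := by
    intro i hi
    rw [Finset.mem_range] at hi
    have hexp : Real.exp (-s * t i) ≤ 1 :=
      Real.exp_le_one_iff.mpr (by nlinarith [ht_nonneg i hi])
    have hΔ : 0 ≤ x (i + 1) - x i := by linarith [hx i hi]
    have hgt := hg0 (t i)
    rw [abs_of_nonneg (by positivity)]
    calc Real.exp (-s * t i) * g (t i) * (x (i + 1) - x i)
        ≤ 1 * g (t i) * δ := by gcongr; exact hδ i hi
      _ = g (t i) * δ := by rw [one_mul]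
  calc |∑ i ∈ range n, Real.exp (-s * t i) * g (t i) * (x (i + 1) - x i)|
      ≤ ∑ i ∈ range n, g (t i) * δ := (abs_sum_le_sum_abs _ _).trans (sum_le_sum hterm)
    _ = (∑ i ∈ range n, g (t i)) * δ := (sum_mul _ _ _).symm
    _ ≤ 2 * δ := by gcongr; exact sum_range_comp_le_two hg ht_sep

theorem laplace_transform_of_injective_indicator_zero
    (A : Set ℝ)
    (Y : ℝ → ℕ) (hY : ∀ x ∈ A, ∀ y ∈ A, Y x = Y y → x = y)
    (f : ℝ → ℝ)
    (hf : ∀ x, (x ∈ A → f x = (2:ℝ) ^ (-(Y x + 1 : ℤ))) ∧ (x ∉ A → f x = 0)) :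
    ∀ s : ℝ, 0 ≤ s → ∀ N : ℕ,
      ∀ ε > (0:ℝ), ∃ δ > (0:ℝ), ∀ (n : ℕ) (x t : ℕ → ℝ),
        x 0 = 0 → x n = (N : ℝ) → (∀ i < n, x i < x (i + 1)) →
        (∀ i < n, t i ∈ Icc (x i) (x (i + 1))) →
        (∀ i < n, x (i + 1) - x i ≤ δ) →
        |∑ i ∈ Finset.range n, Real.exp (-s * t i) * f (t i) * (x (i + 1) - x i)| < ε := by
  intro s hs N ε hε
  have hf_eq : f = A.indicator fun x => (2:ℝ) ^ (-(Y x + 1 : ℤ)) := funext fun x => by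
    by_cases hx : x ∈ A <;> simp [hx, hf x]
  subst hf_eq
  refine ⟨ε / 3, by positivity, fun n x t hx0 _ hx ht hδ => ?_⟩
  calc _ ≤ 2 * (ε / 3) :=
        abs_sum_exp_mul_tag_le (indicator_nonneg fun _ _ => by positivity)
          (sum_indicator_two_zpow_le_one hY) hs (by positivity) hx0 hx ht hδ
    _ < ε := by linarith
end
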